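/- Let M be a positive integer, K a positive integer dividing N_t with P = N_t/K, and ξ_m ∈ ℝ for m = 1,…,M with |(ξ_m − 1)·θ| ≤ 1/P for all θ ∈ [-1,1] (i.e., |ξ_m − 1| ≤ 1/P). Then the average normalized DPP gain satisfies (K/(2M N_t)) ∑_{m=1}^{M} ∫_{-1}^{1} |Ξ_P((ξ_m−1)θ)| dθ ≥ 2/π, where Ξ_P(x) = sin(Pπx/2)/sin(πx/2) (with Ξ_P(0) := P). -/
import Mathlib

open Real Finset

/-- Dirichlet sinc function `Ξ_P(x) = sin(Pπx/2)/sin(πx/2)` with `Ξ_P(0) := P`. -/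
noncomputable def dirichletSinc (P : ℕ) (x : ℝ) : ℝ :=
  if x = 0 then (P : ℝ)
  else Real.sin ((P : ℝ) * π * x / 2) / Real.sin (π * x / 2)

lemma chebU_eval_one : ∀ n : ℕ, (Polynomial.Chebyshev.U ℝ (n : ℤ)).eval 1 = (n : ℝ) + 1 := by
  intro n
  induction n using Nat.twoStepInduction with
  | zero => simp [Polynomial.Chebyshev.U_zero]
  | one => norm_num [Polynomial.Chebyshev.U_one]
  | more n ih1 ih2 =>
    have h : ((n + 2 : ℕ) : ℤ) = (n : ℤ) + 2 := by push_cast; ring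
    have h1 : ((n + 1 : ℕ) : ℤ) = (n : ℤ) + 1 := by push_cast; ring
    rw [h, Polynomial.Chebyshev.U_add_two]
    rw [h1] at ih2
    simp only [Polynomial.eval_sub, Polynomial.eval_mul, Polynomial.eval_X,
      Polynomial.eval_ofNat, ih1, ih2]
    push_cast
    ring

lemma sin_half_ne_zero (x : ℝ) (hx0 : x ≠ 0) (hx : |x| ≤ 1) : Real.sin (π * x / 2) ≠ 0 := by
  intro h
  rw [Real.sin_eq_zero_iff] at h
  obtain ⟨k, hk⟩ := h
  have hπ := Real.pi_pos
  have hx2 : x = 2 * k := by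
    have h1 : π * x = π * (2 * k) := by linarith
    exact mul_left_cancel₀ hπ.ne' h1
  rcases eq_or_ne k 0 with rfl | hk0
  · apply hx0; rw [hx2]; norm_num
  · have h1 : (1 : ℝ) ≤ |(k : ℝ)| := by
      have h2 : (1 : ℤ) ≤ |k| := Int.one_le_abs hk0
      calc (1 : ℝ) = ((1 : ℤ) : ℝ) := by norm_num
        _ ≤ ((|k| : ℤ) : ℝ) := by exact_mod_cast h2
        _ = |(k : ℝ)| := by push_cast; ring
    have h3 : |x| = 2 * |(k : ℝ)| := by rw [hx2, abs_mul, abs_two]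
    linarith

lemma dirichletSinc_eq_cheb (P : ℕ) (hP : 0 < P) (x : ℝ) (hx : |x| ≤ 1) :
    dirichletSinc P x = (Polynomial.Chebyshev.U ℝ ((P : ℤ) - 1)).eval (Real.cos (π * x / 2)) := by
  rcases eq_or_ne x 0 with rfl | hx0
  · have hc : ((P - 1 : ℕ) : ℤ) = (P : ℤ) - 1 := by omega
    have := chebU_eval_one (P - 1)
    rw [hc] at this
    have hcast : ((P - 1 : ℕ) : ℝ) = (P : ℝ) - 1 := by
      have : (1 : ℕ) ≤ P := hP
      push_cast [this]; ring
    simp only [dirichletSinc, if_pos rfl, mul_zero, zero_div, Real.cos_zero, this, hcast,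
      if_true]
    norm_num
  · have hs := sin_half_ne_zero x hx0 hx
    have key := Polynomial.Chebyshev.U_real_cos (π * x / 2) ((P : ℤ) - 1)
    have key2 : (Polynomial.Chebyshev.U ℝ ((P : ℤ) - 1)).eval (Real.cos (π * x / 2)) *
        Real.sin (π * x / 2) = Real.sin ((P : ℝ) * π * x / 2) := by
      rw [key]; congr 1; push_cast; ring
    rw [dirichletSinc, if_neg hx0, eq_comm, eq_div_iff hs, key2]

lemma dirichletSinc_bound (P : ℕ) (hP : 0 < P) (x : ℝ) (hx : |x| ≤ 1 / (P : ℝ)) :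
    2 * (P : ℝ) / π ≤ |dirichletSinc P x| := by
  have hπ := Real.pi_pos
  have hπ3 := Real.pi_gt_three
  have hPR : (0 : ℝ) < P := by exact_mod_cast hP
  rcases eq_or_ne x 0 with rfl | hx0
  · rw [dirichletSinc, if_pos rfl, abs_of_pos hPR]
    rw [div_le_iff₀ hπ]
    nlinarith
  · have hx1 : |x| ≤ 1 := by
      calc |x| ≤ 1 / (P : ℝ) := hx
        _ ≤ 1 := by rw [div_le_one hPR]; exact_mod_cast hP
    have hxpos : 0 < |x| := abs_pos.mpr hx0
    -- denominator
    have hden_ne := sin_half_ne_zero x hx0 hx1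
    have hden_pos : 0 < |Real.sin (π * x / 2)| := abs_pos.mpr hden_ne
    have hden_le : |Real.sin (π * x / 2)| ≤ π * |x| / 2 := by
      calc |Real.sin (π * x / 2)| ≤ |π * x / 2| := Real.abs_sin_le_abs
        _ = π * |x| / 2 := by rw [abs_div, abs_mul, abs_of_pos hπ, abs_two]
    -- numerator
    have hy : (P : ℝ) * π * |x| / 2 ≤ π / 2 := by
      have : (P : ℝ) * |x| ≤ 1 := by
        rw [← le_div_iff₀' hPR]; exact hx
      nlinarith
    have hy0 : 0 ≤ (P : ℝ) * π * |x| / 2 := by positivity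
    have hsin := Real.mul_le_sin hy0 hy
    have habs : Real.sin ((P : ℝ) * π * |x| / 2) ≤ |Real.sin ((P : ℝ) * π * x / 2)| := by
      rcases abs_choice x with h | h
      · rw [h]; exact le_abs_self _
      · rw [h]
        have : (P : ℝ) * π * -x / 2 = -((P : ℝ) * π * x / 2) := by ring
        rw [this, Real.sin_neg]
        exact neg_le_abs _
    have hnum : (P : ℝ) * |x| ≤ |Real.sin ((P : ℝ) * π * x / 2)| := by
      have h4 : 2 / π * ((P : ℝ) * π * |x| / 2) = (P : ℝ) * |x| := by field_simp
      linarith [h4 ▸ hsin]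
    -- combine
    rw [dirichletSinc, if_neg hx0, abs_div]
    rw [le_div_iff₀ hden_pos]
    have : 2 * (P : ℝ) / π * (π * |x| / 2) = (P : ℝ) * |x| := by field_simp
    nlinarith [mul_le_mul_of_nonneg_left hden_le (by positivity : (0:ℝ) ≤ 2 * (P : ℝ) / π)]

lemma integral_bound (P : ℕ) (hP : 0 < P) (c : ℝ) (hc : |c| ≤ 1 / (P : ℝ)) :
    4 * (P : ℝ) / π ≤ ∫ θ in (-1 : ℝ)..1, |dirichletSinc P (c * θ)| := by
  have hPR : (0 : ℝ) < P := by exact_mod_cast hP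
  set f : ℝ → ℝ := fun θ =>
    |(Polynomial.Chebyshev.U ℝ ((P : ℤ) - 1)).eval (Real.cos (π * (c * θ) / 2))| with hf
  have hcθ : ∀ θ : ℝ, |θ| ≤ 1 → |c * θ| ≤ 1 / (P : ℝ) := by
    intro θ hθ
    rw [abs_mul]
    calc |c| * |θ| ≤ (1 / (P : ℝ)) * 1 := by
          exact mul_le_mul hc hθ (abs_nonneg _) (by positivity)
      _ = 1 / (P : ℝ) := by ring
  have h1P : (1 : ℝ) / (P : ℝ) ≤ 1 := by
    rw [div_le_one hPR]; exact_mod_cast hP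
  have heq : Set.EqOn (fun θ => |dirichletSinc P (c * θ)|) f (Set.uIcc (-1 : ℝ) 1) := by
    intro θ hθ
    rw [Set.uIcc_of_le (by norm_num : (-1 : ℝ) ≤ 1)] at hθ
    have hθ1 : |θ| ≤ 1 := abs_le.mpr ⟨hθ.1, hθ.2⟩
    simp only [hf]
    rw [dirichletSinc_eq_cheb P hP _ (le_trans (hcθ θ hθ1) h1P)]
  have hcont : Continuous f := by
    apply Continuous.abs
    exact (Polynomial.Chebyshev.U ℝ ((P : ℤ) - 1)).continuous.comp
      (Real.continuous_cos.comp (by continuity))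
  rw [intervalIntegral.integral_congr heq]
  have hmono : ∫ θ in (-1 : ℝ)..1, (2 * (P : ℝ) / π) ≤ ∫ θ in (-1 : ℝ)..1, f θ := by
    apply intervalIntegral.integral_mono_on (by norm_num : (-1 : ℝ) ≤ 1)
      intervalIntegrable_const (hcont.intervalIntegrable _ _)
    intro θ hθ
    have hθ1 : |θ| ≤ 1 := abs_le.mpr ⟨hθ.1, hθ.2⟩
    have := dirichletSinc_bound P hP (c * θ) (hcθ θ hθ1)
    rw [dirichletSinc_eq_cheb P hP _ (le_trans (hcθ θ hθ1) h1P)] at this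
    exact this
  rw [intervalIntegral.integral_const] at hmono
  have : (1 - (-1 : ℝ)) • (2 * (P : ℝ) / π) = 4 * (P : ℝ) / π := by
    rw [smul_eq_mul]; ring
  linarith [this ▸ hmono]

theorem dpp_average_gain_lower_bound (M : ℕ) (hM : 0 < M)
    (Nt K P : ℕ) (hK : 0 < K) (hP : 0 < P) (hNt : Nt = K * P)
    (ξ : Fin M → ℝ) (hξ : ∀ m, |ξ m - 1| ≤ 1 / (P : ℝ)) :
    ((K : ℝ) / (2 * M * Nt)) *
        ∑ m : Fin M, ∫ θ in (-1 : ℝ)..1, |dirichletSinc P ((ξ m - 1) * θ)| ≥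
      2 / π := by
  have hπ := Real.pi_pos
  have hPR : (0 : ℝ) < P := by exact_mod_cast hP
  have hKR : (0 : ℝ) < K := by exact_mod_cast hK
  have hMR : (0 : ℝ) < M := by exact_mod_cast hM
  have hsum : (M : ℝ) * (4 * (P : ℝ) / π) ≤
      ∑ m : Fin M, ∫ θ in (-1 : ℝ)..1, |dirichletSinc P ((ξ m - 1) * θ)| := by
    calc (M : ℝ) * (4 * (P : ℝ) / π)
        = ∑ _m : Fin M, (4 * (P : ℝ) / π) := by
          rw [Finset.sum_const, Finset.card_univ, Fintype.card_fin, nsmul_eq_mul]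
      _ ≤ _ := Finset.sum_le_sum fun m _ => integral_bound P hP _ (hξ m)
  have hcoef : (K : ℝ) / (2 * M * Nt) = 1 / (2 * M * P) := by
    subst hNt
    push_cast
    field_simp
  rw [ge_iff_le, hcoef]
  have hcoef_pos : (0 : ℝ) < 1 / (2 * (M : ℝ) * P) := by positivity
  calc (2 : ℝ) / π = 1 / (2 * (M : ℝ) * P) * ((M : ℝ) * (4 * (P : ℝ) / π)) := by
        field_simp; ring
    _ ≤ _ := mul_le_mul_of_nonneg_left hsum (le_of_lt hcoef_pos)
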